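/- arXiv:2202.05225 — 2 statements merged into one kernel-verified Lean document; each statement's English description precedes it below -/
import Mathlib

section
/- Let m ≥ 3 and let a_i, b_i, c_i ∈ ℝ (i = 1, …, m) satisfy Σ_i a_i = Σ_i b_i = Σ_i c_i = 0. Then the sum of F_σ over all permutations σ of {1,…,m} equals 0: Σ_{σ ∈ S_m} F_σ = 0. -/
open Finset

/- ### Auxiliary: sums over permutations -/

noncomputable def G3 {m : ℕ} (a b c : Fin m → ℝ) (i j k : Fin m) : ℝ :=
  ∑ σ : Equiv.Perm (Fin m), a (σ i) * b (σ j) * c (σ k)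

noncomputable def G2 {m : ℕ} (u v : Fin m → ℝ) (i j : Fin m) : ℝ :=
  ∑ σ : Equiv.Perm (Fin m), u (σ i) * v (σ j)

lemma G3_perm {m : ℕ} (a b c : Fin m → ℝ) (τ : Equiv.Perm (Fin m)) (i j k : Fin m) :
    G3 a b c (τ i) (τ j) (τ k) = G3 a b c i j k := by
  have h := Equiv.sum_comp (Equiv.mulRight τ)
      (fun σ : Equiv.Perm (Fin m) => a (σ i) * b (σ j) * c (σ k))
  simpa [G3, Equiv.Perm.mul_apply] using h

lemma G2_perm {m : ℕ} (u v : Fin m → ℝ) (τ : Equiv.Perm (Fin m)) (i j : Fin m) :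
    G2 u v (τ i) (τ j) = G2 u v i j := by
  have h := Equiv.sum_comp (Equiv.mulRight τ)
      (fun σ : Equiv.Perm (Fin m) => u (σ i) * v (σ j))
  simpa [G2, Equiv.Perm.mul_apply] using h

lemma G2_symm {m : ℕ} (u v : Fin m → ℝ) (i j : Fin m) :
    G2 u v j i = G2 u v i j := by
  simpa [Equiv.swap_apply_left, Equiv.swap_apply_right] using G2_perm u v (Equiv.swap i j) i j

lemma G3_sw12 {m : ℕ} (a b c : Fin m → ℝ) {i j k : Fin m} (hki : k ≠ i) (hkj : k ≠ j) :
    G3 a b c j i k = G3 a b c i j k := by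
  have h := G3_perm a b c (Equiv.swap i j) i j k
  simpa [Equiv.swap_apply_left, Equiv.swap_apply_right,
    Equiv.swap_apply_of_ne_of_ne hki hkj] using h

lemma G3_sw23 {m : ℕ} (a b c : Fin m → ℝ) {i j k : Fin m} (hij : i ≠ j) (hik : i ≠ k) :
    G3 a b c i k j = G3 a b c i j k := by
  have h := G3_perm a b c (Equiv.swap j k) i j k
  simpa [Equiv.swap_apply_left, Equiv.swap_apply_right,
    Equiv.swap_apply_of_ne_of_ne hij hik] using h

lemma G3_213 {m : ℕ} (a b c : Fin m → ℝ) {x y z : Fin m} (h1 : x < y) (h2 : y < z) :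
    G3 a b c y x z = G3 a b c x y z :=
  G3_sw12 a b c (ne_of_gt (h1.trans h2)) (ne_of_gt h2)

lemma G3_132 {m : ℕ} (a b c : Fin m → ℝ) {x y z : Fin m} (h1 : x < y) (h2 : y < z) :
    G3 a b c x z y = G3 a b c x y z :=
  G3_sw23 a b c (ne_of_lt h1) (ne_of_lt (h1.trans h2))

lemma G3_312 {m : ℕ} (a b c : Fin m → ℝ) {x y z : Fin m} (h1 : x < y) (h2 : y < z) :
    G3 a b c z x y = G3 a b c x y z := by
  rw [G3_sw12 a b c (i := x) (j := z) (k := y) (ne_of_gt h1) (ne_of_lt h2)]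
  exact G3_132 a b c h1 h2

lemma G3_231 {m : ℕ} (a b c : Fin m → ℝ) {x y z : Fin m} (h1 : x < y) (h2 : y < z) :
    G3 a b c y z x = G3 a b c x y z := by
  rw [G3_sw23 a b c (i := y) (j := x) (k := z) (ne_of_gt h1) (ne_of_lt h2)]
  exact G3_213 a b c h1 h2

lemma G3_321 {m : ℕ} (a b c : Fin m → ℝ) {x y z : Fin m} (h1 : x < y) (h2 : y < z) :
    G3 a b c z y x = G3 a b c x y z := by
  rw [G3_sw12 a b c (i := y) (j := z) (k := x) (ne_of_lt h1) (ne_of_lt (h1.trans h2))]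
  exact G3_231 a b c h1 h2

/- ### if-helpers -/

lemma ite_sum {α : Type*} {P : Prop} [Decidable P] (s : Finset α) (f : α → ℝ) :
    (if P then ∑ x ∈ s, f x else 0) = ∑ x ∈ s, (if P then f x else 0) := by
  split_ifs <;> simp

lemma ite_ite {P Q : Prop} [Decidable P] [Decidable Q] (x : ℝ) :
    (if P then (if Q then x else 0) else 0) = if P ∧ Q then x else 0 := by
  split_ifs <;> simp_all

lemma ite_plus {P : Prop} [Decidable P] (x y : ℝ) :
    (if P then x + y else 0) = (if P then x else 0) + (if P then y else 0) := by
  split_ifs <;> simp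

/- ### indicator splits -/

lemma split6 {m : ℕ} (G : Fin m → Fin m → Fin m → ℝ) (i j k : Fin m) :
    (if i ≠ j ∧ i ≠ k ∧ j ≠ k then G i j k else 0)
      = (if i < j ∧ j < k then G i j k else 0)
      + (if i < k ∧ k < j then G i j k else 0)
      + (if j < i ∧ i < k then G i j k else 0)
      + (if j < k ∧ k < i then G i j k else 0)
      + (if k < i ∧ i < j then G i j k else 0)
      + (if k < j ∧ j < i then G i j k else 0) := by
  simp only [ne_eq, ← Fin.val_eq_val, Fin.lt_def]
  split_ifs <;> first | (exfalso; omega) | ring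

lemma split2 {m : ℕ} (H : Fin m → Fin m → ℝ) (i j : Fin m) :
    (if i ≠ j then H i j else 0)
      = (if i < j then H i j else 0) + (if j < i then H i j else 0) := by
  simp only [ne_eq, ← Fin.val_eq_val, Fin.lt_def]
  split_ifs <;> first | (exfalso; omega) | ring

/- ### binder permutation helpers -/

lemma sum3_s213 {m : ℕ} (φ : Fin m → Fin m → Fin m → ℝ) :
    (∑ i, ∑ j, ∑ k, φ i j k) = ∑ i, ∑ j, ∑ k, φ j i k := Finset.sum_comm

lemma sum3_s132 {m : ℕ} (φ : Fin m → Fin m → Fin m → ℝ) :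
    (∑ i, ∑ j, ∑ k, φ i j k) = ∑ i, ∑ j, ∑ k, φ i k j :=
  Finset.sum_congr rfl fun _ _ => Finset.sum_comm

lemma sum3_s312 {m : ℕ} (φ : Fin m → Fin m → Fin m → ℝ) :
    (∑ i, ∑ j, ∑ k, φ i j k) = ∑ i, ∑ j, ∑ k, φ k i j := by
  rw [sum3_s213 φ]; exact sum3_s132 _

lemma sum3_s231 {m : ℕ} (φ : Fin m → Fin m → Fin m → ℝ) :
    (∑ i, ∑ j, ∑ k, φ i j k) = ∑ i, ∑ j, ∑ k, φ j k i := by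
  rw [sum3_s132 φ]; exact sum3_s213 _

lemma sum3_s321 {m : ℕ} (φ : Fin m → Fin m → Fin m → ℝ) :
    (∑ i, ∑ j, ∑ k, φ i j k) = ∑ i, ∑ j, ∑ k, φ k j i := by
  rw [sum3_s312 φ]; exact sum3_s213 _

section
variable {m : ℕ}

lemma sum_ite_eq_single (f : Fin m → ℝ) (i : Fin m) :
    (∑ j, if j = i then f j else 0) = f i := by
  rw [Finset.sum_ite_eq' univ i f]; simp

lemma sum_ite_ne_one (f : Fin m → ℝ) (i : Fin m) :
    (∑ j, if i ≠ j then f j else 0) = (∑ j, f j) - f i := by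
  have : ∀ j, (if i ≠ j then f j else 0) = f j - (if j = i then f j else 0) := by
    intro j
    by_cases h : j = i <;> simp [h, Ne, eq_comm (a := i)]
  simp only [this, Finset.sum_sub_distrib, sum_ite_eq_single]

lemma sum_ite_ne_two (f : Fin m → ℝ) {i j : Fin m} (hij : i ≠ j) :
    (∑ k, if i ≠ k ∧ j ≠ k then f k else 0) = (∑ k, f k) - f i - f j := by
  have h : ∀ k, (if i ≠ k ∧ j ≠ k then f k else 0)
      = if j ≠ k then (if i ≠ k then f k else 0) else 0 := by
    intro k
    by_cases h1 : i ≠ k <;> by_cases h2 : j ≠ k <;> simp [h1, h2]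
  rw [Finset.sum_congr rfl (fun k _ => h k),
    sum_ite_ne_one (fun k => if i ≠ k then f k else 0) j,
    sum_ite_ne_one f i, if_pos hij]

lemma distinct2_eval (U V : Fin m → ℝ) (hV : ∑ p, V p = 0) :
    (∑ i, ∑ j, if i ≠ j then U i * V j else 0) = -∑ i, U i * V i := by
  have step : ∀ i : Fin m, (∑ j, if i ≠ j then U i * V j else 0) = -(U i * V i) := by
    intro i
    rw [sum_ite_ne_one (fun j => U i * V j) i, ← Finset.mul_sum, hV]
    ring
  simp only [step, ← Finset.sum_neg_distrib]

lemma distinct3_eval (A B C : Fin m → ℝ) (hA : ∑ p, A p = 0) (hB : ∑ p, B p = 0)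
    (hC : ∑ p, C p = 0) :
    (∑ i, ∑ j, ∑ k, if i ≠ j ∧ i ≠ k ∧ j ≠ k then A i * B j * C k else 0)
      = 2 * ∑ i, A i * B i * C i := by
  have step1 : ∀ i j : Fin m, (∑ k, if i ≠ j ∧ i ≠ k ∧ j ≠ k then A i * B j * C k else 0)
      = if i ≠ j then A i * B j * (-C i - C j) else 0 := by
    intro i j
    by_cases hij : i = j
    · simp [hij]
    · have h1 : ∀ k, (if i ≠ j ∧ i ≠ k ∧ j ≠ k then A i * B j * C k else 0)
          = A i * B j * (if i ≠ k ∧ j ≠ k then C k else 0) := by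
        intro k
        by_cases h : i ≠ k ∧ j ≠ k <;> simp [h, hij]
      simp only [h1, ← Finset.mul_sum, sum_ite_ne_two C hij, hC, if_pos hij]
      ring
  have step2 : ∀ i : Fin m, (∑ j, if i ≠ j then A i * B j * (-C i - C j) else 0)
      = -(A i * ∑ j, B j * C j) + 2 * (A i * B i * C i) := by
    intro i
    rw [sum_ite_ne_one (fun j => A i * B j * (-C i - C j)) i]
    have : (∑ j, A i * B j * (-C i - C j))
        = A i * (-C i) * (∑ j, B j) - A i * ∑ j, B j * C j := by
      rw [Finset.mul_sum, Finset.mul_sum, ← Finset.sum_sub_distrib]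
      exact Finset.sum_congr rfl fun j _ => by ring
    rw [this, hB]
    ring
  calc (∑ i, ∑ j, ∑ k, if i ≠ j ∧ i ≠ k ∧ j ≠ k then A i * B j * C k else 0)
      = ∑ i, (-(A i * ∑ j, B j * C j) + 2 * (A i * B i * C i)) := by
        refine Finset.sum_congr rfl fun i _ => ?_
        rw [show (∑ j, ∑ k, if i ≠ j ∧ i ≠ k ∧ j ≠ k then A i * B j * C k else 0)
            = ∑ j, if i ≠ j then A i * B j * (-C i - C j) else 0 from
          Finset.sum_congr rfl fun j _ => step1 i j]
        exact step2 i
    _ = 2 * ∑ i, A i * B i * C i := by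
        rw [Finset.sum_add_distrib]
        have h1 : (∑ x : Fin m, -(A x * ∑ j, B j * C j)) = 0 := by
          rw [Finset.sum_neg_distrib, ← Finset.sum_mul, hA, zero_mul, neg_zero]
        have h2 : (∑ x : Fin m, 2 * (A x * B x * C x)) = 2 * ∑ i, A i * B i * C i := by
          rw [Finset.mul_sum]
        rw [h1, h2, zero_add]


lemma region3 (G : Fin m → Fin m → Fin m → ℝ)
    (h213 : ∀ x y z : Fin m, x < y → y < z → G y x z = G x y z)
    (h132 : ∀ x y z : Fin m, x < y → y < z → G x z y = G x y z)
    (h312 : ∀ x y z : Fin m, x < y → y < z → G z x y = G x y z)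
    (h231 : ∀ x y z : Fin m, x < y → y < z → G y z x = G x y z)
    (h321 : ∀ x y z : Fin m, x < y → y < z → G z y x = G x y z) :
    (∑ i, ∑ j, ∑ k, if i ≠ j ∧ i ≠ k ∧ j ≠ k then G i j k else 0)
      = 6 * ∑ i, ∑ j, ∑ k, (if i < j ∧ j < k then G i j k else 0) := by
  have e2 : (∑ i, ∑ j, ∑ k, if i < k ∧ k < j then G i j k else 0)
      = ∑ i, ∑ j, ∑ k, (if i < j ∧ j < k then G i j k else 0) := by
    rw [sum3_s132 (fun i j k => if i < k ∧ k < j then G i j k else 0)]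
    refine Finset.sum_congr rfl fun i _ => Finset.sum_congr rfl fun j _ =>
      Finset.sum_congr rfl fun k _ => ?_
    by_cases h : i < j ∧ j < k
    · simp only [if_pos h]; exact h132 i j k h.1 h.2
    · simp [h]
  have e3 : (∑ i, ∑ j, ∑ k, if j < i ∧ i < k then G i j k else 0)
      = ∑ i, ∑ j, ∑ k, (if i < j ∧ j < k then G i j k else 0) := by
    rw [sum3_s213 (fun i j k => if j < i ∧ i < k then G i j k else 0)]
    refine Finset.sum_congr rfl fun i _ => Finset.sum_congr rfl fun j _ =>
      Finset.sum_congr rfl fun k _ => ?_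
    by_cases h : i < j ∧ j < k
    · simp only [if_pos h]; exact h213 i j k h.1 h.2
    · simp [h]
  have e4 : (∑ i, ∑ j, ∑ k, if j < k ∧ k < i then G i j k else 0)
      = ∑ i, ∑ j, ∑ k, (if i < j ∧ j < k then G i j k else 0) := by
    rw [sum3_s312 (fun i j k => if j < k ∧ k < i then G i j k else 0)]
    refine Finset.sum_congr rfl fun i _ => Finset.sum_congr rfl fun j _ =>
      Finset.sum_congr rfl fun k _ => ?_
    by_cases h : i < j ∧ j < k
    · simp only [if_pos h]; exact h312 i j k h.1 h.2
    · simp [h]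
  have e5 : (∑ i, ∑ j, ∑ k, if k < i ∧ i < j then G i j k else 0)
      = ∑ i, ∑ j, ∑ k, (if i < j ∧ j < k then G i j k else 0) := by
    rw [sum3_s231 (fun i j k => if k < i ∧ i < j then G i j k else 0)]
    refine Finset.sum_congr rfl fun i _ => Finset.sum_congr rfl fun j _ =>
      Finset.sum_congr rfl fun k _ => ?_
    by_cases h : i < j ∧ j < k
    · simp only [if_pos h]; exact h231 i j k h.1 h.2
    · simp [h]
  have e6 : (∑ i, ∑ j, ∑ k, if k < j ∧ j < i then G i j k else 0)
      = ∑ i, ∑ j, ∑ k, (if i < j ∧ j < k then G i j k else 0) := by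
    rw [sum3_s321 (fun i j k => if k < j ∧ j < i then G i j k else 0)]
    refine Finset.sum_congr rfl fun i _ => Finset.sum_congr rfl fun j _ =>
      Finset.sum_congr rfl fun k _ => ?_
    by_cases h : i < j ∧ j < k
    · simp only [if_pos h]; exact h321 i j k h.1 h.2
    · simp [h]
  calc (∑ i, ∑ j, ∑ k, if i ≠ j ∧ i ≠ k ∧ j ≠ k then G i j k else 0)
      = ∑ i, ∑ j, ∑ k, ((if i < j ∧ j < k then G i j k else 0)
      + (if i < k ∧ k < j then G i j k else 0)
      + (if j < i ∧ i < k then G i j k else 0)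
      + (if j < k ∧ k < i then G i j k else 0)
      + (if k < i ∧ i < j then G i j k else 0)
      + (if k < j ∧ j < i then G i j k else 0)) := by
        exact Finset.sum_congr rfl fun i _ => Finset.sum_congr rfl fun j _ =>
          Finset.sum_congr rfl fun k _ => split6 G i j k
    _ = 6 * ∑ i, ∑ j, ∑ k, (if i < j ∧ j < k then G i j k else 0) := by
        simp only [Finset.sum_add_distrib, e2, e3, e4, e5, e6]; ring

lemma region2 (H : Fin m → Fin m → ℝ) (hs : ∀ x y : Fin m, H y x = H x y) :
    (∑ i, ∑ j, if i ≠ j then H i j else 0)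
      = 2 * ∑ i, ∑ j, (if i < j then H i j else 0) := by
  have e2 : (∑ i, ∑ j, if j < i then H i j else 0)
      = ∑ i, ∑ j, (if i < j then H i j else 0) := by
    rw [Finset.sum_comm]
    refine Finset.sum_congr rfl fun i _ => Finset.sum_congr rfl fun j _ => ?_
    by_cases h : i < j
    · simp only [if_pos h]; exact hs i j
    · simp [h]
  calc (∑ i, ∑ j, if i ≠ j then H i j else 0)
      = ∑ i, ∑ j, ((if i < j then H i j else 0) + (if j < i then H i j else 0)) :=
        Finset.sum_congr rfl fun i _ => Finset.sum_congr rfl fun j _ => split2 H i j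
    _ = 2 * ∑ i, ∑ j, (if i < j then H i j else 0) := by
        simp only [Finset.sum_add_distrib, e2]; ring
end


lemma distinct2_eval' {m : ℕ} (U V : Fin m → ℝ) (hU : ∑ p, U p = 0) :
    (∑ i, ∑ j, if i ≠ j then U i * V j else 0) = -∑ i, U i * V i := by
  have step : ∀ i : Fin m, (∑ j, if i ≠ j then U i * V j else 0)
      = U i * (∑ p, V p) - U i * V i := by
    intro i
    rw [sum_ite_ne_one (fun j => U i * V j) i, ← Finset.mul_sum]
  simp only [step]
  rw [Finset.sum_sub_distrib, ← Finset.sum_mul, hU, zero_mul, zero_sub]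

lemma Ioi_sum {m : ℕ} (g : Fin m → ℝ) (i : Fin m) :
    ∑ j ∈ Ioi i, g j = ∑ j, if i < j then g j else 0 := by
  rw [show Ioi i = univ.filter (i < ·) from by ext x; simp, Finset.sum_filter]

lemma sum_push {m : ℕ} (F : Fin m → Fin m → Fin m → Equiv.Perm (Fin m) → ℝ) :
    (∑ i, ∑ j, ∑ k, ∑ σ : Equiv.Perm (Fin m), F i j k σ)
      = ∑ σ : Equiv.Perm (Fin m), ∑ i, ∑ j, ∑ k, F i j k σ := by
  calc (∑ i, ∑ j, ∑ k, ∑ σ : Equiv.Perm (Fin m), F i j k σ)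
      = ∑ i, ∑ j, ∑ σ : Equiv.Perm (Fin m), ∑ k, F i j k σ :=
        Finset.sum_congr rfl fun i _ => Finset.sum_congr rfl fun j _ => Finset.sum_comm
    _ = ∑ i, ∑ σ : Equiv.Perm (Fin m), ∑ j, ∑ k, F i j k σ :=
        Finset.sum_congr rfl fun i _ => Finset.sum_comm
    _ = ∑ σ : Equiv.Perm (Fin m), ∑ i, ∑ j, ∑ k, F i j k σ := Finset.sum_comm

lemma sum_push2 {m : ℕ} (F : Fin m → Fin m → Equiv.Perm (Fin m) → ℝ) :
    (∑ i, ∑ j, ∑ σ : Equiv.Perm (Fin m), F i j σ)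
      = ∑ σ : Equiv.Perm (Fin m), ∑ i, ∑ j, F i j σ := by
  calc (∑ i, ∑ j, ∑ σ : Equiv.Perm (Fin m), F i j σ)
      = ∑ i, ∑ σ : Equiv.Perm (Fin m), ∑ j, F i j σ :=
        Finset.sum_congr rfl fun i _ => Finset.sum_comm
    _ = ∑ σ : Equiv.Perm (Fin m), ∑ i, ∑ j, F i j σ := Finset.sum_comm

lemma G3_def {m : ℕ} (a b c : Fin m → ℝ) (i j k : Fin m) :
    G3 a b c i j k = ∑ σ : Equiv.Perm (Fin m), a (σ i) * b (σ j) * c (σ k) := rfl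

lemma G2_def {m : ℕ} (u v : Fin m → ℝ) (i j : Fin m) :
    G2 u v i j = ∑ σ : Equiv.Perm (Fin m), u (σ i) * v (σ j) := rfl

/-- `F_σ` for real data `a, b, c`. -/
noncomputable def Fperm {m : ℕ} (a b c : Fin m → ℝ) (σ : Equiv.Perm (Fin m)) : ℝ :=
  (∑ i, ∑ j ∈ Ioi i, ∑ k ∈ Ioi j, a (σ i) * b (σ j) * c (σ k))
    + (1 / 2) * ∑ i, ∑ j ∈ Ioi i,
        (a (σ i) * b (σ i) * c (σ j) + a (σ i) * b (σ j) * c (σ j))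
    + (1 / 6) * ∑ i, a i * b i * c i

theorem stmt5 (m : ℕ) (hm : 3 ≤ m) (a b c : Fin m → ℝ)
    (ha : ∑ i, a i = 0) (hb : ∑ i, b i = 0) (hc : ∑ i, c i = 0) :
    ∑ σ : Equiv.Perm (Fin m), Fperm a b c σ = 0 := by
  classical
  set T : ℝ := ∑ i, a i * b i * c i with hT
  set N : ℝ := (Fintype.card (Equiv.Perm (Fin m)) : ℝ) with hN
  have hca : ∀ σ : Equiv.Perm (Fin m), ∑ p, a (σ p) = 0 := fun σ => by
    rw [Equiv.sum_comp σ a]; exact ha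
  have hcb : ∀ σ : Equiv.Perm (Fin m), ∑ p, b (σ p) = 0 := fun σ => by
    rw [Equiv.sum_comp σ b]; exact hb
  have hcc : ∀ σ : Equiv.Perm (Fin m), ∑ p, c (σ p) = 0 := fun σ => by
    rw [Equiv.sum_comp σ c]; exact hc
  have habc : ∀ σ : Equiv.Perm (Fin m), (∑ p, a (σ p) * b (σ p) * c (σ p)) = T := fun σ => by
    rw [Equiv.sum_comp σ (fun p => a p * b p * c p)]
  -- Term 1
  have hA : (∑ σ : Equiv.Perm (Fin m), ∑ i, ∑ j ∈ Ioi i, ∑ k ∈ Ioi j,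
        a (σ i) * b (σ j) * c (σ k))
      = ∑ i, ∑ j, ∑ k, (if i < j ∧ j < k then G3 a b c i j k else 0) := by
    rw [Finset.sum_comm]
    refine Finset.sum_congr rfl fun i _ => ?_
    rw [Finset.sum_comm]
    have h1 : ∀ j : Fin m, (∑ σ : Equiv.Perm (Fin m), ∑ k ∈ Ioi j,
        a (σ i) * b (σ j) * c (σ k)) = ∑ k ∈ Ioi j, G3 a b c i j k := by
      intro j
      rw [Finset.sum_comm]
      exact Finset.sum_congr rfl fun k _ => (G3_def a b c i j k).symm
    rw [Finset.sum_congr rfl fun j _ => h1 j,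
      Ioi_sum (fun j => ∑ k ∈ Ioi j, G3 a b c i j k) i]
    refine Finset.sum_congr rfl fun j _ => ?_
    calc (if i < j then ∑ k ∈ Ioi j, G3 a b c i j k else 0)
        = (if i < j then ∑ k, (if j < k then G3 a b c i j k else 0) else 0) := by
          rw [Ioi_sum (fun k => G3 a b c i j k) j]
      _ = ∑ k, (if i < j then (if j < k then G3 a b c i j k else 0) else 0) := ite_sum _ _
      _ = ∑ k, (if i < j ∧ j < k then G3 a b c i j k else 0) :=
          Finset.sum_congr rfl fun k _ => ite_ite _
  -- value of the distinct triple sum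
  have hB : (∑ i, ∑ j, ∑ k, (if i ≠ j ∧ i ≠ k ∧ j ≠ k then G3 a b c i j k else 0))
      = N * (2 * T) := by
    have h1 : ∀ i j k : Fin m, (if i ≠ j ∧ i ≠ k ∧ j ≠ k then G3 a b c i j k else 0)
        = ∑ σ : Equiv.Perm (Fin m),
            (if i ≠ j ∧ i ≠ k ∧ j ≠ k then a (σ i) * b (σ j) * c (σ k) else 0) := by
      intro i j k; rw [G3_def]; exact ite_sum _ _
    calc (∑ i, ∑ j, ∑ k, (if i ≠ j ∧ i ≠ k ∧ j ≠ k then G3 a b c i j k else 0))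
        = ∑ σ : Equiv.Perm (Fin m), ∑ i, ∑ j, ∑ k,
            (if i ≠ j ∧ i ≠ k ∧ j ≠ k then a (σ i) * b (σ j) * c (σ k) else 0) := by
          simp only [h1]
          exact sum_push _
      _ = ∑ σ : Equiv.Perm (Fin m), (2 * T) := by
          refine Finset.sum_congr rfl fun σ _ => ?_
          rw [distinct3_eval (fun p => a (σ p)) (fun p => b (σ p)) (fun p => c (σ p))
            (hca σ) (hcb σ) (hcc σ), habc σ]
      _ = N * (2 * T) := by
          rw [Finset.sum_const, card_univ, nsmul_eq_mul]
  have hreg3 : (∑ i, ∑ j, ∑ k, (if i ≠ j ∧ i ≠ k ∧ j ≠ k then G3 a b c i j k else 0))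
      = 6 * ∑ i, ∑ j, ∑ k, (if i < j ∧ j < k then G3 a b c i j k else 0) :=
    region3 (G3 a b c)
      (fun x y z h1 h2 => G3_213 a b c h1 h2)
      (fun x y z h1 h2 => G3_132 a b c h1 h2)
      (fun x y z h1 h2 => G3_312 a b c h1 h2)
      (fun x y z h1 h2 => G3_231 a b c h1 h2)
      (fun x y z h1 h2 => G3_321 a b c h1 h2)
  -- Term 2
  have hD : (∑ σ : Equiv.Perm (Fin m), ∑ i, ∑ j ∈ Ioi i,
        (a (σ i) * b (σ i) * c (σ j) + a (σ i) * b (σ j) * c (σ j)))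
      = ∑ i, ∑ j, (if i < j then
          (G2 (fun p => a p * b p) c i j + G2 a (fun p => b p * c p) i j) else 0) := by
    rw [Finset.sum_comm]
    refine Finset.sum_congr rfl fun i _ => ?_
    rw [Finset.sum_comm]
    have h1 : ∀ j : Fin m, (∑ σ : Equiv.Perm (Fin m),
        (a (σ i) * b (σ i) * c (σ j) + a (σ i) * b (σ j) * c (σ j)))
        = G2 (fun p => a p * b p) c i j + G2 a (fun p => b p * c p) i j := by
      intro j
      rw [G2_def, G2_def, ← Finset.sum_add_distrib]
      exact Finset.sum_congr rfl fun σ _ => by ring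
    rw [Finset.sum_congr rfl fun j _ => h1 j,
      Ioi_sum (fun j => G2 (fun p => a p * b p) c i j + G2 a (fun p => b p * c p) i j) i]
  have hE : (∑ i, ∑ j, (if i ≠ j then
        (G2 (fun p => a p * b p) c i j + G2 a (fun p => b p * c p) i j) else 0))
      = N * (-(2 * T)) := by
    have h1 : ∀ i j : Fin m, (if i ≠ j then
          (G2 (fun p => a p * b p) c i j + G2 a (fun p => b p * c p) i j) else 0)
        = ∑ σ : Equiv.Perm (Fin m), (if i ≠ j then
            ((a (σ i) * b (σ i)) * c (σ j) + a (σ i) * (b (σ j) * c (σ j))) else 0) := by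
      intro i j
      rw [G2_def, G2_def, ← Finset.sum_add_distrib]
      exact ite_sum _ _
    calc (∑ i, ∑ j, (if i ≠ j then
          (G2 (fun p => a p * b p) c i j + G2 a (fun p => b p * c p) i j) else 0))
        = ∑ σ : Equiv.Perm (Fin m), ∑ i, ∑ j, (if i ≠ j then
            ((a (σ i) * b (σ i)) * c (σ j) + a (σ i) * (b (σ j) * c (σ j))) else 0) := by
          simp only [h1]
          exact sum_push2 _
      _ = ∑ σ : Equiv.Perm (Fin m), (-(2 * T)) := by
          refine Finset.sum_congr rfl fun σ _ => ?_
          have e1 : (∑ i, ∑ j, (if i ≠ j then (a (σ i) * b (σ i)) * c (σ j) else 0))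
              = -T := by
            rw [distinct2_eval (fun p => a (σ p) * b (σ p)) (fun p => c (σ p)) (hcc σ)]
            rw [show (∑ i, (a (σ i) * b (σ i)) * c (σ i)) = T from habc σ]
          have e2 : (∑ i, ∑ j, (if i ≠ j then a (σ i) * (b (σ j) * c (σ j)) else 0))
              = -T := by
            rw [distinct2_eval' (fun p => a (σ p)) (fun p => b (σ p) * c (σ p)) (hca σ)]
            rw [show (∑ i, a (σ i) * (b (σ i) * c (σ i))) = T from by
              rw [← habc σ]
              exact Finset.sum_congr rfl fun i _ => by ring]
          have e3 : ∀ i j : Fin m, (if i ≠ j then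
              ((a (σ i) * b (σ i)) * c (σ j) + a (σ i) * (b (σ j) * c (σ j))) else 0)
              = (if i ≠ j then (a (σ i) * b (σ i)) * c (σ j) else 0)
              + (if i ≠ j then a (σ i) * (b (σ j) * c (σ j)) else 0) := fun i j =>
            ite_plus _ _
          simp only [e3, Finset.sum_add_distrib]
          rw [e1, e2]
          ring
      _ = N * (-(2 * T)) := by
          rw [Finset.sum_const, card_univ, nsmul_eq_mul]
  have hreg2 : (∑ i, ∑ j, (if i ≠ j then
        (G2 (fun p => a p * b p) c i j + G2 a (fun p => b p * c p) i j) else 0))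
      = 2 * ∑ i, ∑ j, (if i < j then
          (G2 (fun p => a p * b p) c i j + G2 a (fun p => b p * c p) i j) else 0) :=
    region2 _ (fun x y => by
      rw [G2_symm (fun p => a p * b p) c x y, G2_symm a (fun p => b p * c p) x y])
  have h6 : 6 * (∑ i, ∑ j, ∑ k, (if i < j ∧ j < k then G3 a b c i j k else 0))
      = N * (2 * T) := hreg3.symm.trans hB
  have h2 : 2 * (∑ i, ∑ j, (if i < j then
        (G2 (fun p => a p * b p) c i j + G2 a (fun p => b p * c p) i j) else 0))
      = N * (-(2 * T)) := hreg2.symm.trans hE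
  have expand : (∑ σ : Equiv.Perm (Fin m), Fperm a b c σ)
      = (∑ σ : Equiv.Perm (Fin m), ∑ i, ∑ j ∈ Ioi i, ∑ k ∈ Ioi j,
          a (σ i) * b (σ j) * c (σ k))
      + (1 / 2) * (∑ σ : Equiv.Perm (Fin m), ∑ i, ∑ j ∈ Ioi i,
          (a (σ i) * b (σ i) * c (σ j) + a (σ i) * b (σ j) * c (σ j)))
      + N * ((1 / 6) * T) := by
    simp only [Fperm]
    rw [Finset.sum_add_distrib, Finset.sum_add_distrib, ← Finset.mul_sum,
      Finset.sum_const, card_univ, nsmul_eq_mul, ← hT]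
  rw [expand, hA, hD]
  linear_combination (1/6) * h6 + (1/4) * h2
end

section
/- Let a_i, b_i, c_i ∈ ℝ (i = 1, …, 4) satisfy Σ_{i=1}^4 a_i = Σ_{i=1}^4 b_i = Σ_{i=1}^4 c_i = 0. Then F_σ = 0 for every permutation σ of {1,2,3,4} if and only if at least one of the following holds: (i) a_1 = a_2 = a_3 = a_4 = 0; (ii) b_1 = b_2 = b_3 = b_4 = 0; (iii) c_1 = c_2 = c_3 = c_4 = 0; (iv) the 3×4 real matrix with rows (a_1,a_2,a_3,a_4), (b_1,b_2,b_3,b_4), (c_1,c_2,c_3,c_4) has rank at most 1. -/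
open Finset

lemma Fperm_eval (a b c : Fin 4 → ℝ) (σ : Equiv.Perm (Fin 4)) :
    Fperm a b c σ =
    (a (σ 0) * b (σ 1) * c (σ 2) + a (σ 0) * b (σ 1) * c (σ 3)
      + a (σ 0) * b (σ 2) * c (σ 3) + a (σ 1) * b (σ 2) * c (σ 3))
      + (1 / 2) * (a (σ 0) * b (σ 0) * c (σ 1) + a (σ 0) * b (σ 1) * c (σ 1)
      + a (σ 0) * b (σ 0) * c (σ 2) + a (σ 0) * b (σ 2) * c (σ 2)
      + a (σ 0) * b (σ 0) * c (σ 3) + a (σ 0) * b (σ 3) * c (σ 3)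
      + a (σ 1) * b (σ 1) * c (σ 2) + a (σ 1) * b (σ 2) * c (σ 2)
      + a (σ 1) * b (σ 1) * c (σ 3) + a (σ 1) * b (σ 3) * c (σ 3)
      + a (σ 2) * b (σ 2) * c (σ 3) + a (σ 2) * b (σ 3) * c (σ 3))
      + (1 / 6) * (a 0 * b 0 * c 0 + a 1 * b 1 * c 1 + a 2 * b 2 * c 2 + a 3 * b 3 * c 3) := by
  have h0 : Ioi (0 : Fin 4) = {1, 2, 3} := by decide
  have h1 : Ioi (1 : Fin 4) = {2, 3} := by decide
  have h2 : Ioi (2 : Fin 4) = {3} := by decide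
  have h3 : Ioi (3 : Fin 4) = (∅ : Finset (Fin 4)) := by decide
  simp only [Fperm, Fin.sum_univ_four, h0, h1, h2, h3]
  rw [show ({1,2,3} : Finset (Fin 4)) = insert 1 {2,3} from rfl]
  repeat rw [Finset.sum_insert (by decide)]
  simp only [Finset.sum_singleton, Finset.sum_empty, h1, h2, h3]
  repeat rw [Finset.sum_insert (by decide)]
  simp only [Finset.sum_singleton, Finset.sum_empty]
  ring

lemma Fzero_a (a b c : Fin 4 → ℝ) (h : ∀ i, a i = 0) (σ : Equiv.Perm (Fin 4)) :
    Fperm a b c σ = 0 := by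
  rw [Fperm_eval]; simp [h]

lemma Fzero_b (a b c : Fin 4 → ℝ) (h : ∀ i, b i = 0) (σ : Equiv.Perm (Fin 4)) :
    Fperm a b c σ = 0 := by
  rw [Fperm_eval]; simp [h]

lemma Fzero_c (a b c : Fin 4 → ℝ) (h : ∀ i, c i = 0) (σ : Equiv.Perm (Fin 4)) :
    Fperm a b c σ = 0 := by
  rw [Fperm_eval]; simp [h]

lemma Fzero_smul (a : Fin 4 → ℝ) (μ ν : ℝ) (ha : ∑ i, a i = 0) (σ : Equiv.Perm (Fin 4)) :
    Fperm a (μ • a) (ν • a) σ = 0 := by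
  have ha4 : a 0 + a 1 + a 2 + a 3 = 0 := by rw [← Fin.sum_univ_four]; exact ha
  have hs : a (σ 0) + a (σ 1) + a (σ 2) + a (σ 3) = 0 := by
    have h := Equiv.sum_comp σ a
    simp only [Fin.sum_univ_four] at h
    linarith
  have hq : a (σ 0) * a (σ 0) * a (σ 0) + a (σ 1) * a (σ 1) * a (σ 1)
      + a (σ 2) * a (σ 2) * a (σ 2) + a (σ 3) * a (σ 3) * a (σ 3)
      = a 0 * a 0 * a 0 + a 1 * a 1 * a 1 + a 2 * a 2 * a 2 + a 3 * a 3 * a 3 := by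
    have h := Equiv.sum_comp σ (fun i => a i * a i * a i)
    simp only [Fin.sum_univ_four] at h
    exact h
  rw [Fperm_eval]
  simp only [Pi.smul_apply, smul_eq_mul]
  linear_combination (μ * ν / 6 * (a (σ 0) + a (σ 1) + a (σ 2) + a (σ 3)) ^ 2) * hs
    - (μ * ν / 6) * hq

lemma resolve {d x : ℝ} (hd : d ≠ 0) (h : d * x = 0) : x = 0 := by
  rcases mul_eq_zero.1 h with h' | h'
  · exact absurd h' hd
  · exact h'

lemma cancel2 {x y : ℝ} (hy : y ≠ 0) (h : x * (y * y) = 0) : x = 0 := by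
  rcases mul_eq_zero.1 h with h' | h'
  · exact h'
  · exact absurd (mul_self_eq_zero.1 h') hy

lemma ptrans (a0 a1 a2 b0 b1 b2 c0 c1 c2 : ℝ)
    (hX0 : a1 * b2 - a2 * b1 = 0) (hX1 : a2 * b0 - a0 * b2 = 0) (hX2 : a0 * b1 - a1 * b0 = 0)
    (hY0 : b1 * c2 - b2 * c1 = 0) (hY1 : b2 * c0 - b0 * c2 = 0) (hY2 : b0 * c1 - b1 * c0 = 0)
    (hB : b0 ≠ 0 ∨ b1 ≠ 0 ∨ b2 ≠ 0) :
    a0 * c1 - a1 * c0 = 0 ∧ a0 * c2 - a2 * c0 = 0 ∧ a1 * c2 - a2 * c1 = 0 := by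
  obtain hq | hq | hq := hB
  · exact ⟨cancel2 hq (by linear_combination (a0 * b0) * hY2 + (c0 * b0) * hX2),
      cancel2 hq (by linear_combination - (a0 * b0) * hY1 - (c0 * b0) * hX1),
      cancel2 hq (by linear_combination - (c2 * b0) * hX2 - (a0 * b1) * hY1
        - (c1 * b0) * hX1 - (a0 * b2) * hY2)⟩
  · exact ⟨cancel2 hq (by linear_combination (c1 * b1) * hX2 + (a1 * b1) * hY2),
      cancel2 hq (by linear_combination (c2 * b1) * hX2 + (a1 * b0) * hY0
        + (c0 * b1) * hX0 + (a1 * b2) * hY2),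
      cancel2 hq (by linear_combination (a1 * b1) * hY0 + (c1 * b1) * hX0)⟩
  · exact ⟨cancel2 hq (by linear_combination - (c1 * b2) * hX1 - (a2 * b0) * hY0
        - (c0 * b2) * hX0 - (a2 * b1) * hY1),
      cancel2 hq (by linear_combination - (c2 * b2) * hX1 - (a2 * b2) * hY1),
      cancel2 hq (by linear_combination (c2 * b2) * hX0 + (a2 * b2) * hY0)⟩

lemma core (a0 a1 a2 b0 b1 b2 c0 c1 c2 : ℝ)
    (h00 : a0 * (b1 * c2 - b2 * c1) - c0 * (a1 * b2 - a2 * b1) = 0)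
    (h01 : a0 * (b2 * c0 - b0 * c2) - c0 * (a2 * b0 - a0 * b2) = 0)
    (h02 : a0 * (b0 * c1 - b1 * c0) - c0 * (a0 * b1 - a1 * b0) = 0)
    (h10 : a1 * (b1 * c2 - b2 * c1) - c1 * (a1 * b2 - a2 * b1) = 0)
    (h11 : a1 * (b2 * c0 - b0 * c2) - c1 * (a2 * b0 - a0 * b2) = 0)
    (h12 : a1 * (b0 * c1 - b1 * c0) - c1 * (a0 * b1 - a1 * b0) = 0)
    (h20 : a2 * (b1 * c2 - b2 * c1) - c2 * (a1 * b2 - a2 * b1) = 0)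
    (h21 : a2 * (b2 * c0 - b0 * c2) - c2 * (a2 * b0 - a0 * b2) = 0)
    (h22 : a2 * (b0 * c1 - b1 * c0) - c2 * (a0 * b1 - a1 * b0) = 0)
    (hA : a0 ≠ 0 ∨ a1 ≠ 0 ∨ a2 ≠ 0) (hB : b0 ≠ 0 ∨ b1 ≠ 0 ∨ b2 ≠ 0)
    (hC : c0 ≠ 0 ∨ c1 ≠ 0 ∨ c2 ≠ 0) :
    (a0 * b1 - a1 * b0 = 0 ∧ a0 * b2 - a2 * b0 = 0 ∧ a1 * b2 - a2 * b1 = 0) ∧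
    (a0 * c1 - a1 * c0 = 0 ∧ a0 * c2 - a2 * c0 = 0 ∧ a1 * c2 - a2 * c1 = 0) := by
  have c01 : a0 * c1 - a1 * c0 = 0 := by
    by_contra hD
    have x0 : a1 * b2 - a2 * b1 = 0 := resolve hD (by linear_combination a1 * h00 - a0 * h10)
    have x1 : a2 * b0 - a0 * b2 = 0 := resolve hD (by linear_combination a1 * h01 - a0 * h11)
    have x2 : a0 * b1 - a1 * b0 = 0 := resolve hD (by linear_combination a1 * h02 - a0 * h12)
    have y0 : b1 * c2 - b2 * c1 = 0 := resolve hD (by linear_combination c1 * h00 - c0 * h10)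
    have y1 : b2 * c0 - b0 * c2 = 0 := resolve hD (by linear_combination c1 * h01 - c0 * h11)
    have y2 : b0 * c1 - b1 * c0 = 0 := resolve hD (by linear_combination c1 * h02 - c0 * h12)
    exact hD (ptrans a0 a1 a2 b0 b1 b2 c0 c1 c2 x0 x1 x2 y0 y1 y2 hB).1
  have c02 : a0 * c2 - a2 * c0 = 0 := by
    by_contra hD
    have x0 : a1 * b2 - a2 * b1 = 0 := resolve hD (by linear_combination a2 * h00 - a0 * h20)
    have x1 : a2 * b0 - a0 * b2 = 0 := resolve hD (by linear_combination a2 * h01 - a0 * h21)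
    have x2 : a0 * b1 - a1 * b0 = 0 := resolve hD (by linear_combination a2 * h02 - a0 * h22)
    have y0 : b1 * c2 - b2 * c1 = 0 := resolve hD (by linear_combination c2 * h00 - c0 * h20)
    have y1 : b2 * c0 - b0 * c2 = 0 := resolve hD (by linear_combination c2 * h01 - c0 * h21)
    have y2 : b0 * c1 - b1 * c0 = 0 := resolve hD (by linear_combination c2 * h02 - c0 * h22)
    exact hD (ptrans a0 a1 a2 b0 b1 b2 c0 c1 c2 x0 x1 x2 y0 y1 y2 hB).2.1
  have c12 : a1 * c2 - a2 * c1 = 0 := by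
    by_contra hD
    have x0 : a1 * b2 - a2 * b1 = 0 := resolve hD (by linear_combination a2 * h10 - a1 * h20)
    have x1 : a2 * b0 - a0 * b2 = 0 := resolve hD (by linear_combination a2 * h11 - a1 * h21)
    have x2 : a0 * b1 - a1 * b0 = 0 := resolve hD (by linear_combination a2 * h12 - a1 * h22)
    have y0 : b1 * c2 - b2 * c1 = 0 := resolve hD (by linear_combination c2 * h10 - c1 * h20)
    have y1 : b2 * c0 - b0 * c2 = 0 := resolve hD (by linear_combination c2 * h11 - c1 * h21)
    have y2 : b0 * c1 - b1 * c0 = 0 := resolve hD (by linear_combination c2 * h12 - c1 * h22)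
    exact hD (ptrans a0 a1 a2 b0 b1 b2 c0 c1 c2 x0 x1 x2 y0 y1 y2 hB).2.2
  refine ⟨?_, c01, c02, c12⟩
  obtain hp | hp | hp := hA
  · have hcp : c0 ≠ 0 := by
      obtain hr | hr | hr := hC
      · exact hr
      · intro h0; exact hr (resolve hp (by linear_combination c01 + a1 * h0))
      · intro h0; exact hr (resolve hp (by linear_combination c02 + a2 * h0))
    have h2cp : (2 : ℝ) * c0 ≠ 0 := mul_ne_zero two_ne_zero hcp
    exact ⟨resolve h2cp (by linear_combination - h02 + b0 * c01),
      resolve h2cp (by linear_combination h01 + b0 * c02),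
      resolve h2cp (by linear_combination - h00 - b2 * c01 + b1 * c02)⟩
  · have hcp : c1 ≠ 0 := by
      obtain hr | hr | hr := hC
      · intro h0; exact hr (resolve hp (by linear_combination - c01 + a0 * h0))
      · exact hr
      · intro h0; exact hr (resolve hp (by linear_combination c12 + a2 * h0))
    have h2cp : (2 : ℝ) * c1 ≠ 0 := mul_ne_zero two_ne_zero hcp
    exact ⟨resolve h2cp (by linear_combination - h12 + b1 * c01),
      resolve h2cp (by linear_combination h11 + b2 * c01 + b0 * c12),
      resolve h2cp (by linear_combination - h10 + b1 * c12)⟩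
  · have hcp : c2 ≠ 0 := by
      obtain hr | hr | hr := hC
      · intro h0; exact hr (resolve hp (by linear_combination - c02 + a0 * h0))
      · intro h0; exact hr (resolve hp (by linear_combination - c12 + a1 * h0))
      · exact hr
    have h2cp : (2 : ℝ) * c2 ≠ 0 := mul_ne_zero two_ne_zero hcp
    exact ⟨resolve h2cp (by linear_combination - h22 + b1 * c02 - b0 * c12),
      resolve h2cp (by linear_combination h21 + b2 * c02),
      resolve h2cp (by linear_combination - h20 + b2 * c12)⟩

lemma rank_le_one_aux (a b c : Fin 4 → ℝ) (p : Fin 4) (hap : a p ≠ 0)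
    (hb : ∀ j, a p * b j = b p * a j) (hc : ∀ j, a p * c j = c p * a j) :
    (Matrix.of ![a, b, c] : Matrix (Fin 3) (Fin 4) ℝ).rank ≤ 1 := by
  rw [Matrix.rank_eq_finrank_span_row]
  have ha0 : a ≠ 0 := fun h0 => hap (by rw [h0]; rfl)
  have hle : Submodule.span ℝ (Set.range (Matrix.of ![a, b, c] : Matrix (Fin 3) (Fin 4) ℝ))
      ≤ ℝ ∙ a := by
    rw [Submodule.span_le]
    rintro x ⟨i, rfl⟩
    fin_cases i
    · exact Submodule.mem_span_singleton_self a
    · refine Submodule.mem_span_singleton.2 ⟨b p / a p, funext fun j => ?_⟩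
      rw [Pi.smul_apply, smul_eq_mul, div_mul_eq_mul_div, div_eq_iff hap]
      show b p * a j = b j * a p
      linear_combination - hb j
    · refine Submodule.mem_span_singleton.2 ⟨c p / a p, funext fun j => ?_⟩
      rw [Pi.smul_apply, smul_eq_mul, div_mul_eq_mul_div, div_eq_iff hap]
      show c p * a j = c j * a p
      linear_combination - hc j
  exact (Submodule.finrank_mono hle).trans (le_of_eq (finrank_span_singleton ha0))

def s1 : Equiv.Perm (Fin 4) := ⟨![0,1,2,3], ![0,1,2,3], by decide, by decide⟩
def s2 : Equiv.Perm (Fin 4) := ⟨![0,1,3,2], ![0,1,3,2], by decide, by decide⟩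
def s3 : Equiv.Perm (Fin 4) := ⟨![0,2,1,3], ![0,2,1,3], by decide, by decide⟩
def s4 : Equiv.Perm (Fin 4) := ⟨![0,2,3,1], ![0,3,1,2], by decide, by decide⟩
def s5 : Equiv.Perm (Fin 4) := ⟨![0,3,1,2], ![0,2,3,1], by decide, by decide⟩
def s6 : Equiv.Perm (Fin 4) := ⟨![0,3,2,1], ![0,3,2,1], by decide, by decide⟩
def s7 : Equiv.Perm (Fin 4) := ⟨![1,0,2,3], ![1,0,2,3], by decide, by decide⟩
def s8 : Equiv.Perm (Fin 4) := ⟨![1,2,0,3], ![2,0,1,3], by decide, by decide⟩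

theorem stmt6 (a b c : Fin 4 → ℝ)
    (ha : ∑ i, a i = 0) (hb : ∑ i, b i = 0) (hc : ∑ i, c i = 0) :
    (∀ σ : Equiv.Perm (Fin 4), Fperm a b c σ = 0) ↔
      ((∀ i, a i = 0) ∨ (∀ i, b i = 0) ∨ (∀ i, c i = 0) ∨
        (Matrix.of ![a, b, c] : Matrix (Fin 3) (Fin 4) ℝ).rank ≤ 1) := by
  have ha4 : a 0 + a 1 + a 2 + a 3 = 0 := by rw [← Fin.sum_univ_four]; exact ha
  have hb4 : b 0 + b 1 + b 2 + b 3 = 0 := by rw [← Fin.sum_univ_four]; exact hb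
  have hc4 : c 0 + c 1 + c 2 + c 3 = 0 := by rw [← Fin.sum_univ_four]; exact hc
  have ha3 : a 3 = -(a 0 + a 1 + a 2) := by linarith
  have hb3 : b 3 = -(b 0 + b 1 + b 2) := by linarith
  have hc3 : c 3 = -(c 0 + c 1 + c 2) := by linarith
  constructor
  · intro hF
    by_cases hA : ∀ i, a i = 0
    · exact Or.inl hA
    by_cases hB : ∀ i, b i = 0
    · exact Or.inr (Or.inl hB)
    by_cases hC : ∀ i, c i = 0
    · exact Or.inr (Or.inr (Or.inl hC))
    refine Or.inr (Or.inr (Or.inr ?_))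
    have hA' : a 0 ≠ 0 ∨ a 1 ≠ 0 ∨ a 2 ≠ 0 := by
      by_contra hcon
      push_neg at hcon
      exact hA fun i => by fin_cases i <;> simp [hcon.1, hcon.2.1, hcon.2.2, ha3]
    have hB' : b 0 ≠ 0 ∨ b 1 ≠ 0 ∨ b 2 ≠ 0 := by
      by_contra hcon
      push_neg at hcon
      exact hB fun i => by fin_cases i <;> simp [hcon.1, hcon.2.1, hcon.2.2, hb3]
    have hC' : c 0 ≠ 0 ∨ c 1 ≠ 0 ∨ c 2 ≠ 0 := by
      by_contra hcon
      push_neg at hcon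
      exact hC fun i => by fin_cases i <;> simp [hcon.1, hcon.2.1, hcon.2.2, hc3]
    have h1 : (a 0 * b 1 * c 2 + a 0 * b 1 * c 3
      + a 0 * b 2 * c 3 + a 1 * b 2 * c 3)
      + (1 / 2) * (a 0 * b 0 * c 1 + a 0 * b 1 * c 1
      + a 0 * b 0 * c 2 + a 0 * b 2 * c 2
      + a 0 * b 0 * c 3 + a 0 * b 3 * c 3
      + a 1 * b 1 * c 2 + a 1 * b 2 * c 2
      + a 1 * b 1 * c 3 + a 1 * b 3 * c 3
      + a 2 * b 2 * c 3 + a 2 * b 3 * c 3)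
      + (1 / 6) * (a 0 * b 0 * c 0 + a 1 * b 1 * c 1 + a 2 * b 2 * c 2 + a 3 * b 3 * c 3) = 0 := by
      have h := hF s1
      rw [Fperm_eval] at h
      simp only [show s1 0 = 0 from rfl, show s1 1 = 1 from rfl,
        show s1 2 = 2 from rfl, show s1 3 = 3 from rfl] at h
      exact h
    have h2 : (a 0 * b 1 * c 3 + a 0 * b 1 * c 2
      + a 0 * b 3 * c 2 + a 1 * b 3 * c 2)
      + (1 / 2) * (a 0 * b 0 * c 1 + a 0 * b 1 * c 1
      + a 0 * b 0 * c 3 + a 0 * b 3 * c 3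
      + a 0 * b 0 * c 2 + a 0 * b 2 * c 2
      + a 1 * b 1 * c 3 + a 1 * b 3 * c 3
      + a 1 * b 1 * c 2 + a 1 * b 2 * c 2
      + a 3 * b 3 * c 2 + a 3 * b 2 * c 2)
      + (1 / 6) * (a 0 * b 0 * c 0 + a 1 * b 1 * c 1 + a 2 * b 2 * c 2 + a 3 * b 3 * c 3) = 0 := by
      have h := hF s2
      rw [Fperm_eval] at h
      simp only [show s2 0 = 0 from rfl, show s2 1 = 1 from rfl,
        show s2 2 = 3 from rfl, show s2 3 = 2 from rfl] at h
      exact h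
    have h3 : (a 0 * b 2 * c 1 + a 0 * b 2 * c 3
      + a 0 * b 1 * c 3 + a 2 * b 1 * c 3)
      + (1 / 2) * (a 0 * b 0 * c 2 + a 0 * b 2 * c 2
      + a 0 * b 0 * c 1 + a 0 * b 1 * c 1
      + a 0 * b 0 * c 3 + a 0 * b 3 * c 3
      + a 2 * b 2 * c 1 + a 2 * b 1 * c 1
      + a 2 * b 2 * c 3 + a 2 * b 3 * c 3
      + a 1 * b 1 * c 3 + a 1 * b 3 * c 3)
      + (1 / 6) * (a 0 * b 0 * c 0 + a 1 * b 1 * c 1 + a 2 * b 2 * c 2 + a 3 * b 3 * c 3) = 0 := by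
      have h := hF s3
      rw [Fperm_eval] at h
      simp only [show s3 0 = 0 from rfl, show s3 1 = 2 from rfl,
        show s3 2 = 1 from rfl, show s3 3 = 3 from rfl] at h
      exact h
    have h4 : (a 0 * b 2 * c 3 + a 0 * b 2 * c 1
      + a 0 * b 3 * c 1 + a 2 * b 3 * c 1)
      + (1 / 2) * (a 0 * b 0 * c 2 + a 0 * b 2 * c 2
      + a 0 * b 0 * c 3 + a 0 * b 3 * c 3
      + a 0 * b 0 * c 1 + a 0 * b 1 * c 1
      + a 2 * b 2 * c 3 + a 2 * b 3 * c 3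
      + a 2 * b 2 * c 1 + a 2 * b 1 * c 1
      + a 3 * b 3 * c 1 + a 3 * b 1 * c 1)
      + (1 / 6) * (a 0 * b 0 * c 0 + a 1 * b 1 * c 1 + a 2 * b 2 * c 2 + a 3 * b 3 * c 3) = 0 := by
      have h := hF s4
      rw [Fperm_eval] at h
      simp only [show s4 0 = 0 from rfl, show s4 1 = 2 from rfl,
        show s4 2 = 3 from rfl, show s4 3 = 1 from rfl] at h
      exact h
    have h5 : (a 0 * b 3 * c 1 + a 0 * b 3 * c 2
      + a 0 * b 1 * c 2 + a 3 * b 1 * c 2)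
      + (1 / 2) * (a 0 * b 0 * c 3 + a 0 * b 3 * c 3
      + a 0 * b 0 * c 1 + a 0 * b 1 * c 1
      + a 0 * b 0 * c 2 + a 0 * b 2 * c 2
      + a 3 * b 3 * c 1 + a 3 * b 1 * c 1
      + a 3 * b 3 * c 2 + a 3 * b 2 * c 2
      + a 1 * b 1 * c 2 + a 1 * b 2 * c 2)
      + (1 / 6) * (a 0 * b 0 * c 0 + a 1 * b 1 * c 1 + a 2 * b 2 * c 2 + a 3 * b 3 * c 3) = 0 := by
      have h := hF s5
      rw [Fperm_eval] at h
      simp only [show s5 0 = 0 from rfl, show s5 1 = 3 from rfl,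
        show s5 2 = 1 from rfl, show s5 3 = 2 from rfl] at h
      exact h
    have h6 : (a 0 * b 3 * c 2 + a 0 * b 3 * c 1
      + a 0 * b 2 * c 1 + a 3 * b 2 * c 1)
      + (1 / 2) * (a 0 * b 0 * c 3 + a 0 * b 3 * c 3
      + a 0 * b 0 * c 2 + a 0 * b 2 * c 2
      + a 0 * b 0 * c 1 + a 0 * b 1 * c 1
      + a 3 * b 3 * c 2 + a 3 * b 2 * c 2
      + a 3 * b 3 * c 1 + a 3 * b 1 * c 1
      + a 2 * b 2 * c 1 + a 2 * b 1 * c 1)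
      + (1 / 6) * (a 0 * b 0 * c 0 + a 1 * b 1 * c 1 + a 2 * b 2 * c 2 + a 3 * b 3 * c 3) = 0 := by
      have h := hF s6
      rw [Fperm_eval] at h
      simp only [show s6 0 = 0 from rfl, show s6 1 = 3 from rfl,
        show s6 2 = 2 from rfl, show s6 3 = 1 from rfl] at h
      exact h
    have h7 : (a 1 * b 0 * c 2 + a 1 * b 0 * c 3
      + a 1 * b 2 * c 3 + a 0 * b 2 * c 3)
      + (1 / 2) * (a 1 * b 1 * c 0 + a 1 * b 0 * c 0
      + a 1 * b 1 * c 2 + a 1 * b 2 * c 2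
      + a 1 * b 1 * c 3 + a 1 * b 3 * c 3
      + a 0 * b 0 * c 2 + a 0 * b 2 * c 2
      + a 0 * b 0 * c 3 + a 0 * b 3 * c 3
      + a 2 * b 2 * c 3 + a 2 * b 3 * c 3)
      + (1 / 6) * (a 0 * b 0 * c 0 + a 1 * b 1 * c 1 + a 2 * b 2 * c 2 + a 3 * b 3 * c 3) = 0 := by
      have h := hF s7
      rw [Fperm_eval] at h
      simp only [show s7 0 = 1 from rfl, show s7 1 = 0 from rfl,
        show s7 2 = 2 from rfl, show s7 3 = 3 from rfl] at h
      exact h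
    have h8 : (a 1 * b 2 * c 0 + a 1 * b 2 * c 3
      + a 1 * b 0 * c 3 + a 2 * b 0 * c 3)
      + (1 / 2) * (a 1 * b 1 * c 2 + a 1 * b 2 * c 2
      + a 1 * b 1 * c 0 + a 1 * b 0 * c 0
      + a 1 * b 1 * c 3 + a 1 * b 3 * c 3
      + a 2 * b 2 * c 0 + a 2 * b 0 * c 0
      + a 2 * b 2 * c 3 + a 2 * b 3 * c 3
      + a 0 * b 0 * c 3 + a 0 * b 3 * c 3)
      + (1 / 6) * (a 0 * b 0 * c 0 + a 1 * b 1 * c 1 + a 2 * b 2 * c 2 + a 3 * b 3 * c 3) = 0 := by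
      have h := hF s8
      rw [Fperm_eval] at h
      simp only [show s8 0 = 1 from rfl, show s8 1 = 2 from rfl,
        show s8 2 = 0 from rfl, show s8 3 = 3 from rfl] at h
      exact h
    rw [ha3, hb3, hc3] at h1 h2 h3 h4 h5 h6 h7 h8
    have P00 : a 0 * (b 1 * c 2 - b 2 * c 1) - c 0 * (a 1 * b 2 - a 2 * b 1) = 0 := by
      linear_combination h1 - h3 + h5 - h6
    have P01 : a 0 * (b 2 * c 0 - b 0 * c 2) - c 0 * (a 2 * b 0 - a 0 * b 2) = 0 := by
      linear_combination h2 - h3 - h4 + h5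
    have P02 : a 0 * (b 0 * c 1 - b 1 * c 0) - c 0 * (a 0 * b 1 - a 1 * b 0) = 0 := by
      linear_combination h1 + h2 - h4 - h6
    have P10 : a 1 * (b 1 * c 2 - b 2 * c 1) - c 1 * (a 1 * b 2 - a 2 * b 1) = 0 := by
      linear_combination h1 + h3 + h5 + h6 + 2 * h8
    have P11 : a 1 * (b 2 * c 0 - b 0 * c 2) - c 1 * (a 2 * b 0 - a 0 * b 2) = 0 := by
      linear_combination h2 + h3 + h4 + h5 + 2 * h8
    have P12 : a 1 * (b 0 * c 1 - b 1 * c 0) - c 1 * (a 0 * b 1 - a 1 * b 0) = 0 := by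
      linear_combination h1 - h2 + h4 + h6 - 2 * h7
    have P20 : a 2 * (b 1 * c 2 - b 2 * c 1) - c 2 * (a 1 * b 2 - a 2 * b 1) = 0 := by
      linear_combination - h1 - h3 - 3 * h5 + h6 - 2 * h8
    have P21 : a 2 * (b 2 * c 0 - b 0 * c 2) - c 2 * (a 2 * b 0 - a 0 * b 2) = 0 := by
      linear_combination - 3 * h2 - h3 - h4 - 3 * h5 - 2 * h7 - 2 * h8
    have P22 : a 2 * (b 0 * c 1 - b 1 * c 0) - c 2 * (a 0 * b 1 - a 1 * b 0) = 0 := by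
      linear_combination - h1 - h2 - h4 - 2 * h5 + h6 - 2 * h8
    obtain ⟨⟨e1, e2, e3⟩, f1, f2, f3⟩ := core (a 0) (a 1) (a 2) (b 0) (b 1) (b 2)
      (c 0) (c 1) (c 2) P00 P01 P02 P10 P11 P12 P20 P21 P22 hA' hB' hC'
    obtain hp | hp | hp := hA'
    · refine rank_le_one_aux a b c 0 hp (fun j => ?_) (fun j => ?_)
      · fin_cases j
        · show a 0 * b 0 = b 0 * a 0
          ring
        · show a 0 * b 1 = b 0 * a 1
          linear_combination e1
        · show a 0 * b 2 = b 0 * a 2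
          linear_combination e2
        · show a 0 * b 3 = b 0 * a 3
          linear_combination a 0 * hb3 - b 0 * ha3 - e1 - e2
      · fin_cases j
        · show a 0 * c 0 = c 0 * a 0
          ring
        · show a 0 * c 1 = c 0 * a 1
          linear_combination f1
        · show a 0 * c 2 = c 0 * a 2
          linear_combination f2
        · show a 0 * c 3 = c 0 * a 3
          linear_combination a 0 * hc3 - c 0 * ha3 - f1 - f2
    · refine rank_le_one_aux a b c 1 hp (fun j => ?_) (fun j => ?_)
      · fin_cases j
        · show a 1 * b 0 = b 1 * a 0
          linear_combination - e1
        · show a 1 * b 1 = b 1 * a 1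
          ring
        · show a 1 * b 2 = b 1 * a 2
          linear_combination e3
        · show a 1 * b 3 = b 1 * a 3
          linear_combination a 1 * hb3 - b 1 * ha3 + e1 - e3
      · fin_cases j
        · show a 1 * c 0 = c 1 * a 0
          linear_combination - f1
        · show a 1 * c 1 = c 1 * a 1
          ring
        · show a 1 * c 2 = c 1 * a 2
          linear_combination f3
        · show a 1 * c 3 = c 1 * a 3
          linear_combination a 1 * hc3 - c 1 * ha3 + f1 - f3
    · refine rank_le_one_aux a b c 2 hp (fun j => ?_) (fun j => ?_)
      · fin_cases j
        · show a 2 * b 0 = b 2 * a 0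
          linear_combination - e2
        · show a 2 * b 1 = b 2 * a 1
          linear_combination - e3
        · show a 2 * b 2 = b 2 * a 2
          ring
        · show a 2 * b 3 = b 2 * a 3
          linear_combination a 2 * hb3 - b 2 * ha3 + e2 + e3
      · fin_cases j
        · show a 2 * c 0 = c 2 * a 0
          linear_combination - f2
        · show a 2 * c 1 = c 2 * a 1
          linear_combination - f3
        · show a 2 * c 2 = c 2 * a 2
          ring
        · show a 2 * c 3 = c 2 * a 3
          linear_combination a 2 * hc3 - c 2 * ha3 + f2 + f3
  · rintro (h | h | h | h)
    · exact Fzero_a a b c h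
    · exact Fzero_b a b c h
    · exact Fzero_c a b c h
    · by_cases hA : ∀ i, a i = 0
      · exact Fzero_a a b c hA
      have ha0 : a ≠ 0 := fun h0 => hA fun i => by rw [h0]; rfl
      rw [Matrix.rank_eq_finrank_span_row] at h
      have hle : (ℝ ∙ a) ≤ Submodule.span ℝ
          (Set.range (Matrix.of ![a, b, c] : Matrix (Fin 3) (Fin 4) ℝ)) := by
        rw [Submodule.span_singleton_le_iff_mem]
        exact Submodule.subset_span ⟨0, rfl⟩
      have heq : (ℝ ∙ a) = Submodule.span ℝ
          (Set.range (Matrix.of ![a, b, c] : Matrix (Fin 3) (Fin 4) ℝ)) :=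
        Submodule.eq_of_le_of_finrank_le hle (by rw [finrank_span_singleton ha0]; exact h)
      have hbmem : b ∈ (ℝ ∙ a) := by rw [heq]; exact Submodule.subset_span ⟨1, rfl⟩
      have hcmem : c ∈ (ℝ ∙ a) := by rw [heq]; exact Submodule.subset_span ⟨2, rfl⟩
      obtain ⟨μ, hμ⟩ := Submodule.mem_span_singleton.1 hbmem
      obtain ⟨ν, hν⟩ := Submodule.mem_span_singleton.1 hcmem
      intro σ
      rw [← hμ, ← hν]
      exact Fzero_smul a μ ν ha σ
end
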